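/- arXiv:2008.00550 — 3 statements merged into one kernel-verified Lean document; each statement's English description precedes it below -/
import Mathlib

section
/- Let Δt > 0, H ≥ 0, and let (aₙ), (bₙ), (cₙ), (dₙ) be sequences of non-negative real numbers such that for all integers l ≥ 0, a_l + Δt·Σ_{n=0}^{l} bₙ ≤ Δt·Σ_{n=0}^{l-1} dₙ·aₙ + Δt·Σ_{n=0}^{l} cₙ + H. Then for all l ≥ 0, a_l + Δt·Σ_{n=0}^{l} bₙ ≤ exp(Δt·Σ_{n=0}^{l-1} dₙ)·(Δt·Σ_{n=0}^{l} cₙ + H). -/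
/-!
The right-hand sides `v l = C l + ∑_{n<l} x n * u n` of the implicit inequality dominate `u`, so
they satisfy the explicit recursion `v (l+1) ≤ (1 + x l) * v l + (C (l+1) - C l)`, to which the
classical discrete Grönwall inequality applies; the increments of `C` telescope to `C l - C 0`.
The recursion multiplies by `1 + x l` instead of dividing by `1 - x l`, so no smallness
condition on `x l` arises.
-/

namespace DiscreteGronwallPaper

open Finset

theorem le_mul_exp_of_le_add_sum_mul (x u C : ℕ → ℝ) (hx : ∀ n, 0 ≤ x n) (hC : Monotone C)
    (hC₀ : 0 ≤ C 0) (hu : ∀ l, u l ≤ C l + ∑ n ∈ range l, x n * u n) (l : ℕ) :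
    u l ≤ C l * Real.exp (∑ n ∈ range l, x n) := by
  set v : ℕ → ℝ := fun l ↦ C l + ∑ n ∈ range l, x n * u n with hv_def
  have hv : ∀ n, v (n + 1) ≤ (1 + x n) * v n + (C (n + 1) - C n) := fun n ↦ by
    have := mul_le_mul_of_nonneg_left (hu n) (hx n)
    simp only [hv_def, sum_range_succ]
    linarith
  calc u l ≤ v l := hu l
    _ ≤ (v 0 + ∑ k ∈ Ico 0 l, (C (k + 1) - C k)) * Real.exp (∑ n ∈ Ico 0 l, x n) :=
      _root_.discrete_gronwall (by simpa [v] using hC₀) (fun n _ ↦ hv n) (fun n _ ↦ hx n)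
        (fun n _ ↦ sub_nonneg.2 (hC n.le_succ)) l.zero_le
    _ = C l * Real.exp (∑ n ∈ range l, x n) := by
      rw [← range_eq_Ico, sum_range_sub C]
      simp [v]

theorem discrete_gronwall_general (Δt H : ℝ) (hΔt : 0 < Δt) (hH : 0 ≤ H)
    (a b c d : ℕ → ℝ)
    (hb : ∀ n, 0 ≤ b n) (hc : ∀ n, 0 ≤ c n) (hd : ∀ n, 0 ≤ d n)
    (hyp : ∀ l, a l + Δt * ∑ n ∈ Finset.range (l+1), b n ≤
      Δt * ∑ n ∈ Finset.range l, d n * a n + Δt * ∑ n ∈ Finset.range (l+1), c n + H) :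
    ∀ l, a l + Δt * ∑ n ∈ Finset.range (l+1), b n ≤
      Real.exp (Δt * ∑ n ∈ Finset.range l, d n) *
        (Δt * ∑ n ∈ Finset.range (l+1), c n + H) := by
  set C : ℕ → ℝ := fun l ↦ Δt * ∑ n ∈ range (l + 1), c n + H
  set u : ℕ → ℝ := fun l ↦ a l + Δt * ∑ n ∈ range (l + 1), b n
  have hC : Monotone C := monotone_nat_of_le_succ fun n ↦ by
    simp only [C, sum_range_succ _ (n + 1)]
    gcongr
    exact le_add_of_nonneg_right (hc _)
  have hC₀ : 0 ≤ C 0 := by simpa [C] using add_nonneg (mul_nonneg hΔt.le (hc 0)) hH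
  have hu : ∀ l, u l ≤ C l + ∑ n ∈ range l, Δt * d n * u n := fun l ↦ by
    have hdu : Δt * ∑ n ∈ range l, d n * a n ≤ ∑ n ∈ range l, Δt * d n * u n := by
      rw [mul_sum]
      refine sum_le_sum fun n _ ↦ ?_
      have : 0 ≤ Δt * ∑ k ∈ range (n + 1), b k := mul_nonneg hΔt.le (sum_nonneg fun k _ ↦ hb k)
      nlinarith [mul_nonneg hΔt.le (hd n)]
    linarith [hyp l]
  intro l
  have := le_mul_exp_of_le_add_sum_mul _ u C (fun n ↦ mul_nonneg hΔt.le (hd n)) hC hC₀ hu l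
  rwa [← mul_sum, mul_comm] at this

/-- Discrete Gronwall lemma without time step restriction. -/
theorem discrete_gronwall (Δt H : ℝ) (hΔt : 0 < Δt) (hH : 0 ≤ H)
    (a b c d : ℕ → ℝ)
    (ha : ∀ n, 0 ≤ a n) (hb : ∀ n, 0 ≤ b n) (hc : ∀ n, 0 ≤ c n) (hd : ∀ n, 0 ≤ d n)
    (hyp : ∀ l, a l + Δt * ∑ n ∈ Finset.range (l+1), b n ≤
      Δt * ∑ n ∈ Finset.range l, d n * a n + Δt * ∑ n ∈ Finset.range (l+1), c n + H) :
    ∀ l, a l + Δt * ∑ n ∈ Finset.range (l+1), b n ≤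
      Real.exp (Δt * ∑ n ∈ Finset.range l, d n) *
        (Δt * ∑ n ∈ Finset.range (l+1), c n + H) :=
  discrete_gronwall_general Δt H hΔt hH a b c d hb hc hd hyp

end DiscreteGronwallPaper
end

section
/- Let φ : [t^{n-1}, t^{n+1}] → ℝ be three times continuously differentiable, where t^{n+1} - t^n = t^n - t^{n-1} = Δt > 0. Then |φ'(t^{n+1}) - (3φ(t^{n+1}) - 4φ(t^n) + φ(t^{n-1}))/(2Δt)|² ≤ C·Δt³·∫_{t^{n-1}}^{t^{n+1}} |φ'''(t)|² dt, for some constant C independent of φ and Δt. -/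
open intervalIntegral Set

/-!
Expanding `φ tⁿ` and `φ tⁿ⁻¹` around `tⁿ⁺¹` by Taylor's formula with integral remainder, the
terms in `φ`, `φ'` and `φ''` cancel in the BDF2 quotient, so the defect is `(4 R₁ - R₂) / (2 Δt)`,
where `Rᵢ = ∫ kᵢ φ'''` with quadratic kernels `kᵢ`. Cauchy–Schwarz bounds `R₁²` and `R₂²` by
`Δt⁵ / 20` and `32 Δt⁵ / 20` times `∫ |φ'''|²`, which gives the estimate with `C = 6 / 5`.
-/

theorem taylor_integral_remainder_of_contDiff {f : ℝ → ℝ} {n : ℕ}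
    (hf : ContDiff ℝ (n + 1 : ℕ) f) (x₀ x : ℝ) :
    f x - taylorWithinEval f n univ x₀ x =
      ∫ t in x₀..x, (x - t) ^ n / n.factorial * iteratedDeriv (n + 1) f t := by
  rcases eq_or_ne x₀ x with rfl | hne
  · simp
  have hu := uniqueDiffOn_uIcc hne
  have hderiv : ∀ k ≤ n + 1, ∀ t ∈ uIcc x₀ x,
      iteratedDerivWithin k f (uIcc x₀ x) t = iteratedDeriv k f t := fun k hk t ht =>
    iteratedDerivWithin_eq_iteratedDeriv hu (hf.contDiffAt.of_le (by exact_mod_cast hk)) ht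
  have htaylor : taylorWithinEval f n (uIcc x₀ x) x₀ x = taylorWithinEval f n univ x₀ x := by
    simp only [taylor_within_apply, iteratedDerivWithin_univ]
    refine Finset.sum_congr rfl fun k hk => ?_
    rw [hderiv k (by grind) x₀ left_mem_uIcc]
  rw [← htaylor, taylor_integral_remainder hf.contDiffOn]
  exact integral_congr fun t ht => by rw [smul_eq_mul, hderiv (n + 1) le_rfl t ht]

theorem taylor_integral_remainder_two {f : ℝ → ℝ} (hf : ContDiff ℝ 3 f) (x₀ x : ℝ) :
    f x = f x₀ + deriv f x₀ * (x - x₀) + iteratedDeriv 2 f x₀ * (x - x₀) ^ 2 / 2 +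
      ∫ t in x₀..x, (x - t) ^ 2 / 2 * iteratedDeriv 3 f t := by
  have h := taylor_integral_remainder_of_contDiff (n := 2) hf x₀ x
  simp only [taylor_within_apply, iteratedDerivWithin_univ, Finset.sum_range_succ,
    Finset.sum_range_zero, iteratedDeriv_zero, iteratedDeriv_one, smul_eq_mul] at h
  norm_num [Nat.factorial] at h ⊢
  linarith

theorem sq_integral_mul_le_integral_sq_mul_integral_sq {f g : ℝ → ℝ} (hf : Continuous f)
    (hg : Continuous g) (a b : ℝ) :
    (∫ s in a..b, f s * g s) ^ 2 ≤ (∫ s in a..b, f s ^ 2) * ∫ s in a..b, g s ^ 2 := by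
  wlog hab : a ≤ b generalizing a b
  · simpa only [integral_symm b a, neg_sq, neg_mul_neg] using this b a (le_of_not_ge hab)
  have hquad : ∀ x : ℝ, 0 ≤ (∫ s in a..b, g s ^ 2) * (x * x) + 2 * (∫ s in a..b, f s * g s) * x +
      ∫ s in a..b, f s ^ 2 := by
    intro x
    have hexp : ∫ s in a..b, (f s + x * g s) ^ 2 = (∫ s in a..b, g s ^ 2) * (x * x) +
        2 * (∫ s in a..b, f s * g s) * x + ∫ s in a..b, f s ^ 2 := by
      have hpoint : (fun s => (f s + x * g s) ^ 2) =
          fun s => x * x * g s ^ 2 + 2 * x * (f s * g s) + f s ^ 2 := by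
        funext s; ring
      rw [hpoint, integral_add, integral_add, integral_const_mul, integral_const_mul]
      · ring
      all_goals exact Continuous.intervalIntegrable (by fun_prop) _ _
    exact hexp ▸ integral_nonneg hab fun s _ => sq_nonneg _
  have hdiscrim := discrim_le_zero hquad
  rw [discrim] at hdiscrim
  linarith

theorem integral_sq_taylor_kernel (x₀ x : ℝ) :
    ∫ t in x₀..x, ((x - t) ^ 2 / 2) ^ 2 = (x - x₀) ^ 5 / 20 := by
  rw [integral_comp_sub_left (fun u => (u ^ 2 / 2) ^ 2)]
  simp [div_pow, ← pow_mul, integral_pow]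
  ring

theorem sq_integral_taylor_remainder_le {M : ℝ → ℝ} (hM : Continuous M) (x₀ x : ℝ) :
    (∫ t in x₀..x, (x - t) ^ 2 / 2 * M t) ^ 2 ≤ (x - x₀) ^ 5 / 20 * ∫ t in x₀..x, M t ^ 2 := by
  have hcs := sq_integral_mul_le_integral_sq_mul_integral_sq
    (by fun_prop : Continuous fun t => (x - t) ^ 2 / 2) hM x₀ x
  rwa [integral_sq_taylor_kernel] at hcs

theorem bdf2_defect_eq {φ : ℝ → ℝ} (hφ : ContDiff ℝ 3 φ) (t : ℝ) {Δt : ℝ} (hΔt : Δt ≠ 0) :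
    deriv φ (t + Δt) - (3 * φ (t + Δt) - 4 * φ t + φ (t - Δt)) / (2 * Δt) =
      (4 * (∫ s in t + Δt..t, (t - s) ^ 2 / 2 * iteratedDeriv 3 φ s) -
        ∫ s in t + Δt..t - Δt, (t - Δt - s) ^ 2 / 2 * iteratedDeriv 3 φ s) / (2 * Δt) := by
  rw [taylor_integral_remainder_two hφ (t + Δt) t,
    taylor_integral_remainder_two hφ (t + Δt) (t - Δt)]
  field_simp
  ring

/-- BDF2 consistency estimate: there is a constant `C`, independent of `φ` and `Δt`,
such that the BDF2 approximation of the derivative satisfies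
`|φ'(tⁿ⁺¹) - (3φ(tⁿ⁺¹) - 4φ(tⁿ) + φ(tⁿ⁻¹))/(2Δt)|² ≤ C Δt³ ∫_{tⁿ⁻¹}^{tⁿ⁺¹} |φ'''|²`. -/
theorem bdf2_consistency :
    ∃ C > (0:ℝ), ∀ (φ : ℝ → ℝ), ContDiff ℝ 3 φ →
      ∀ (t Δt : ℝ), 0 < Δt →
      |deriv φ (t + Δt) - (3 * φ (t + Δt) - 4 * φ t + φ (t - Δt)) / (2 * Δt)| ^ 2 ≤
        C * Δt ^ 3 * ∫ s in (t - Δt)..(t + Δt), |iteratedDeriv 3 φ s| ^ 2 := by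
  refine ⟨6 / 5, by norm_num, fun φ hφ t Δt hΔt => ?_⟩
  rw [sq_abs, bdf2_defect_eq hφ t hΔt.ne', div_pow, div_le_iff₀ (by positivity)]
  simp only [sq_abs]
  set M := iteratedDeriv 3 φ
  have hM : Continuous M := hφ.continuous_iteratedDeriv 3 le_rfl
  set R₁ := ∫ s in t + Δt..t, (t - s) ^ 2 / 2 * M s
  set R₂ := ∫ s in t + Δt..t - Δt, (t - Δt - s) ^ 2 / 2 * M s
  set I := ∫ s in t - Δt..t + Δt, M s ^ 2
  have hR₁ : R₁ ^ 2 ≤ Δt ^ 5 / 20 * I :=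
    calc R₁ ^ 2 ≤ (t - (t + Δt)) ^ 5 / 20 * ∫ s in t + Δt..t, M s ^ 2 :=
          sq_integral_taylor_remainder_le hM _ _
      _ = Δt ^ 5 / 20 * ∫ s in t..t + Δt, M s ^ 2 := by rw [integral_symm]; ring
      _ ≤ Δt ^ 5 / 20 * I := by
          gcongr
          exact integral_mono_interval (by linarith) (by linarith) le_rfl
            (.of_forall fun s => sq_nonneg _) ((hM.pow 2).intervalIntegrable _ _)
  have hR₂ : R₂ ^ 2 ≤ 32 * Δt ^ 5 / 20 * I :=
    calc R₂ ^ 2 ≤ (t - Δt - (t + Δt)) ^ 5 / 20 * ∫ s in t + Δt..t - Δt, M s ^ 2 :=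
          sq_integral_taylor_remainder_le hM _ _
      _ = 32 * Δt ^ 5 / 20 * I := by rw [integral_symm]; ring
  -- `(4 R₁ - R₂)² + (4 R₁ + R₂)² = 32 R₁² + 2 R₂²`
  nlinarith [sq_nonneg (4 * R₁ + R₂)]
end

section
/- Let (aₙ) be non-negative reals with a₀ = a₁ = 0, and suppose for each n ≥ 1, a_{n+1} + b_{n+1} ≤ aₙ + K(dₙ aₙ + d_{n-1} a_{n-1}) + cₙ for non-negative bₙ, cₙ, dₙ and K > 0. Then for all M, a_M + Σ_{n=2}^{M} bₙ ≤ exp(2K Σ_{n=1}^{M-1} dₙ) · Σ_{n=1}^{M-1} cₙ. -/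
/-- Two-level discrete Gronwall-type inequality for two-step (BDF2-type) schemes. -/
theorem two_level_gronwall (K : ℝ) (hK : 0 < K) (a b c d : ℕ → ℝ)
    (ha : ∀ n, 0 ≤ a n) (hb : ∀ n, 0 ≤ b n) (hc : ∀ n, 0 ≤ c n) (hd : ∀ n, 0 ≤ d n)
    (ha0 : a 0 = 0) (ha1 : a 1 = 0)
    (hrec : ∀ n, 1 ≤ n → a (n+1) + b (n+1) ≤
      a n + K * (d n * a n + d (n-1) * a (n-1)) + c n) :
    ∀ M, a M + ∑ n ∈ Finset.Icc 2 M, b n ≤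
      Real.exp (2*K * ∑ n ∈ Finset.Icc 1 (M-1), d n) * ∑ n ∈ Finset.Icc 1 (M-1), c n := by
  have hDnn : ∀ m, (0:ℝ) ≤ ∑ n ∈ Finset.Icc 1 m, d n :=
    fun m => Finset.sum_nonneg fun i _ => hd i
  have hCnn : ∀ m, (0:ℝ) ≤ ∑ n ∈ Finset.Icc 1 m, c n :=
    fun m => Finset.sum_nonneg fun i _ => hc i
  have hBnn : ∀ m, (0:ℝ) ≤ ∑ n ∈ Finset.Icc 2 m, b n :=
    fun m => Finset.sum_nonneg fun i _ => hb i
  have hDmono : ∀ {m k : ℕ}, m ≤ k →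
      (∑ n ∈ Finset.Icc 1 m, d n) ≤ ∑ n ∈ Finset.Icc 1 k, d n := by
    intro m k h
    exact Finset.sum_le_sum_of_subset_of_nonneg (Finset.Icc_subset_Icc_right h)
      (fun i _ _ => hd i)
  have hCmono : ∀ {m k : ℕ}, m ≤ k →
      (∑ n ∈ Finset.Icc 1 m, c n) ≤ ∑ n ∈ Finset.Icc 1 k, c n := by
    intro m k h
    exact Finset.sum_le_sum_of_subset_of_nonneg (Finset.Icc_subset_Icc_right h)
      (fun i _ _ => hc i)
  suffices H : ∀ M, a M + ∑ n ∈ Finset.Icc 2 M, b n ≤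
      Real.exp (K * ((∑ n ∈ Finset.Icc 1 (M-1), d n) + ∑ n ∈ Finset.Icc 1 (M-2), d n)) *
        ∑ n ∈ Finset.Icc 1 (M-1), c n by
    intro M
    refine (H M).trans (mul_le_mul_of_nonneg_right ?_ (hCnn _))
    rw [Real.exp_le_exp]
    have h1 := hDmono (show M-2 ≤ M-1 by omega)
    nlinarith [hDnn (M-1)]
  intro M
  induction M using Nat.strong_induction_on with
  | _ M ih =>
  match M with
  | 0 => simp [ha0]
  | 1 => simp [ha1]
  | 2 =>
    have h1 := hrec 1 le_rfl
    simp [ha0, ha1] at h1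
    simp only [show (2:ℕ)-1 = 1 from rfl, show (2:ℕ)-2 = 0 from rfl]
    rw [Finset.Icc_self, Finset.sum_singleton, show Finset.Icc 1 0 = ∅ by rfl,
      Finset.sum_empty, Finset.Icc_self, Finset.sum_singleton, Finset.sum_singleton]
    have he : (1:ℝ) ≤ Real.exp (K * (d 1 + 0)) := by
      rw [Real.one_le_exp_iff]
      have := hd 1
      nlinarith
    nlinarith [hc 1]
  | (k+3) =>
    have IH2 := ih (k+2) (by omega)
    have IH1 := ih (k+1) (by omega)
    simp only [show k+2-1 = k+1 from rfl, show k+2-2 = k from rfl,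
      show k+1-1 = k from rfl, show k+3-1 = k+2 from rfl, show k+3-2 = k+1 from rfl] at *
    have hrec' := hrec (k+2) (by omega)
    simp only [show k+2-1 = k+1 from rfl] at hrec'
    -- abbreviations
    set D0 := ∑ n ∈ Finset.Icc 1 (k+1-2), d n with hD0
    set D1 := ∑ n ∈ Finset.Icc 1 k, d n with hD1
    set D2 := ∑ n ∈ Finset.Icc 1 (k+1), d n with hD2
    set D3 := ∑ n ∈ Finset.Icc 1 (k+2), d n with hD3
    set C1 := ∑ n ∈ Finset.Icc 1 k, c n with hC1
    set C2 := ∑ n ∈ Finset.Icc 1 (k+1), c n with hC2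
    set C3 := ∑ n ∈ Finset.Icc 1 (k+2), c n with hC3
    have hD2eq : D2 = D1 + d (k+1) := by
      rw [hD2, hD1, Finset.sum_Icc_succ_top (by omega)]
    have hD3eq : D3 = D2 + d (k+2) := by
      rw [hD3, hD2, Finset.sum_Icc_succ_top (by omega)]
    have hC3eq : C3 = C2 + c (k+2) := by
      rw [hC3, hC2, Finset.sum_Icc_succ_top (by omega)]
    have hBeq : ∑ n ∈ Finset.Icc 2 (k+3), b n
        = (∑ n ∈ Finset.Icc 2 (k+2), b n) + b (k+3) := by
      rw [Finset.sum_Icc_succ_top (by omega)]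
    rw [hBeq]
    set X2 := Real.exp (K * (D2 + D1)) with hX2
    set X1 := Real.exp (K * (D1 + D0)) with hX1
    set ρ := Real.exp (K * (d (k+2) + d (k+1))) with hρ
    have hX3 : Real.exp (K * (D3 + D2)) = ρ * X2 := by
      rw [hρ, hX2, ← Real.exp_add, hD3eq, hD2eq]
      ring_nf
    rw [hX3]
    have hX1le : X1 ≤ X2 := by
      rw [hX1, hX2, Real.exp_le_exp]
      have : D0 ≤ D2 := hDmono (by omega)
      have : D1 ≤ D2 := hDmono (by omega)
      nlinarith
    have hX2one : (1:ℝ) ≤ X2 := by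
      rw [hX2, Real.one_le_exp_iff]
      have := hDnn k
      have := hDnn (k+1)
      rw [← hD1, ← hD2] at *
      positivity
    have hρge : 1 + K * (d (k+2) + d (k+1)) ≤ ρ := by
      have := Real.add_one_le_exp (K * (d (k+2) + d (k+1)))
      linarith
    have hC12 : C1 ≤ C2 := hCmono (by omega)
    have hA2 : a (k+2) ≤ X2 * C2 := by
      have := hBnn (k+2); linarith
    have hA1 : a (k+1) ≤ X1 * C1 := by
      have := hBnn (k+1); linarith
    have hA1' : a (k+1) ≤ X2 * C2 :=
      hA1.trans (mul_le_mul hX1le hC12 (hCnn k) (by positivity))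
    have hC2nn : 0 ≤ C2 := hCnn (k+1)
    have hC1nn : 0 ≤ C1 := hCnn k
    have hX2nn : (0:ℝ) ≤ X2 := by positivity
    rw [hC3eq]
    have hX2C2 : (0:ℝ) ≤ X2 * C2 := mul_nonneg hX2nn hC2nn
    have t1 : K * (d (k+2) * a (k+2)) ≤ K * d (k+2) * (X2 * C2) := by
      have := mul_le_mul_of_nonneg_left hA2 (mul_nonneg hK.le (hd (k+2)))
      linarith [this]
    have t2 : K * (d (k+1) * a (k+1)) ≤ K * d (k+1) * (X2 * C2) := by
      have := mul_le_mul_of_nonneg_left hA1' (mul_nonneg hK.le (hd (k+1)))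
      linarith [this]
    have step2 : (1 + K * d (k+2) + K * d (k+1)) * (X2 * C2) ≤ ρ * (X2 * C2) :=
      mul_le_mul_of_nonneg_right (by linarith) hX2C2
    have hρone : (1:ℝ) ≤ ρ := by
      rw [hρ, Real.one_le_exp_iff]
      have := hd (k+1); have := hd (k+2)
      positivity
    have hρX2 : (1:ℝ) ≤ ρ * X2 := by nlinarith [hρone, hX2one]
    have step3 : c (k+2) ≤ ρ * X2 * c (k+2) := by
      have := mul_le_mul_of_nonneg_right hρX2 (hc (k+2))
      linarith [this]
    simp only [show k+2+1 = k+3 from rfl] at hrec'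
    linarith [t1, t2, IH2, hrec', step2, step3]
end
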